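/- For the scalar inverse adjustment problem under the L∞-type objective: fix c ∈ ℝ and x⁰ ∈ ℝᴺ, x⁰ ≥ 0. The minimum of max_k(Γ_k + Δ_k) + (α + β) over nonnegative Γ, Δ, α, β subject to Σ_k(Δ_k - Γ_k)x⁰_k - α + β = c equals |c| · min(1, 1/Σ_k x⁰_k) if Σ_k x⁰_k > 0, and equals |c| if x⁰ = 0. -/

import Mathlib

/-!
Any feasible point satisfies
`|c| ≤ |∑ (Δ_k - Γ_k) x⁰_k| + α + β ≤ (max_k (Γ_k + Δ_k)) · ∑ x⁰_k + (α + β) ≤ t · max 1 (∑ x⁰_k)`,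
so every objective value `t` is at least `|c| / max 1 (∑ x⁰_k)`. This bound is attained by
absorbing `c` entirely in `α, β` (cost `|c|`) or by spreading it uniformly over all `Γ_k, Δ_k`
(cost `|c| / ∑ x⁰_k`). Both cases of the theorem are this value, since
`min 1 (1 / S) = 1 / max 1 S` for `S > 0` and `max 1 0 = 1`.
-/

open Finset

theorem abs_sum_sub_mul_le {ι : Type*} {s : Finset ι} {Γ Δ x : ι → ℝ} {M : ℝ}
    (hΓ : ∀ k ∈ s, 0 ≤ Γ k) (hΔ : ∀ k ∈ s, 0 ≤ Δ k) (hx : ∀ k ∈ s, 0 ≤ x k)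
    (hM : ∀ k ∈ s, Γ k + Δ k ≤ M) :
    |∑ k ∈ s, (Δ k - Γ k) * x k| ≤ M * ∑ k ∈ s, x k := by
  rw [mul_sum]
  refine (abs_sum_le_sum_abs _ _).trans (sum_le_sum fun k hk => ?_)
  have hdiff : |Δ k - Γ k| ≤ M := by
    have := hΓ k hk; have := hΔ k hk; have := hM k hk
    exact abs_sub_le_iff.2 ⟨by linarith, by linarith⟩
  rw [abs_mul, abs_of_nonneg (hx k hk)]
  exact mul_le_mul_of_nonneg_right hdiff (hx k hk)

theorem min_one_one_div_eq_one_div_max_one {S : ℝ} (hS : 0 < S) :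
    min 1 (1 / S) = 1 / max 1 S := by
  rcases le_total S 1 with h | h
  · rw [min_eq_left (one_le_one_div hS h), max_eq_left h, div_one]
  · rw [min_eq_right (div_le_one_of_le₀ h hS.le), max_eq_right h]

section AdjustmentCosts

variable {ι : Type*} [Fintype ι] [Nonempty ι]

def adjustmentCosts (x0 : ι → ℝ) (c : ℝ) : Set ℝ :=
  {t | ∃ (Γ Δ : ι → ℝ) (α β : ℝ),
    (∀ k, 0 ≤ Γ k) ∧ (∀ k, 0 ≤ Δ k) ∧ 0 ≤ α ∧ 0 ≤ β ∧
    (∑ k, (Δ k - Γ k) * x0 k) - α + β = c ∧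
    t = univ.sup' univ_nonempty (fun k => Γ k + Δ k) + (α + β)}

theorem abs_mem_adjustmentCosts (x0 : ι → ℝ) (c : ℝ) : |c| ∈ adjustmentCosts x0 c :=
  ⟨0, 0, c⁻, c⁺, fun _ => le_rfl, fun _ => le_rfl, negPart_nonneg c, posPart_nonneg c,
    by simp only [Pi.zero_apply, sub_self, zero_mul, sum_const_zero]; linarith [posPart_sub_negPart c],
    by simp only [Pi.zero_apply, add_zero, sup'_const]; linarith [posPart_add_negPart c]⟩

theorem abs_div_sum_mem_adjustmentCosts {x0 : ι → ℝ} (c : ℝ) (hS : 0 < ∑ k, x0 k) :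
    |c| / ∑ k, x0 k ∈ adjustmentCosts x0 c := by
  set S := ∑ k, x0 k
  refine ⟨fun _ => c⁻ / S, fun _ => c⁺ / S, 0, 0, fun _ => by positivity,
    fun _ => by positivity, le_rfl, le_rfl, ?_, ?_⟩
  · show ∑ k, (c⁺ / S - c⁻ / S) * x0 k - 0 + 0 = c
    rw [div_sub_div_same, posPart_sub_negPart, ← mul_sum, div_mul_cancel₀ _ hS.ne']
    ring
  · rw [sup'_const, ← posPart_add_negPart c, add_div]
    ring

theorem abs_le_mul_max_one_of_mem_adjustmentCosts {x0 : ι → ℝ} {c t : ℝ}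
    (hx0 : ∀ k, 0 ≤ x0 k) (ht : t ∈ adjustmentCosts x0 c) :
    |c| ≤ t * max 1 (∑ k, x0 k) := by
  obtain ⟨Γ, Δ, α, β, hΓ, hΔ, hα, hβ, rfl, rfl⟩ := ht
  set M := univ.sup' univ_nonempty fun k => Γ k + Δ k
  have hMk (k : ι) : Γ k + Δ k ≤ M := le_sup' (fun k => Γ k + Δ k) (mem_univ k)
  have hM : 0 ≤ M := by
    obtain ⟨k⟩ := ‹Nonempty ι›
    linarith [hMk k, hΓ k, hΔ k]
  have hsum := abs_sum_sub_mul_le (s := univ) (fun k _ => hΓ k) (fun k _ => hΔ k)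
    (fun k _ => hx0 k) (fun k _ => hMk k)
  set D := ∑ k, (Δ k - Γ k) * x0 k
  calc |D - α + β|
      ≤ |D| + (α + β) := abs_le.2 ⟨by linarith [neg_abs_le D], by linarith [le_abs_self D]⟩
    _ ≤ M * max 1 (∑ k, x0 k) + (α + β) * max 1 (∑ k, x0 k) := by
        gcongr
        · exact hsum.trans (mul_le_mul_of_nonneg_left (le_max_right _ _) hM)
        · exact le_mul_of_one_le_right (by positivity) (le_max_left _ _)
    _ = (M + (α + β)) * max 1 (∑ k, x0 k) := by ring

theorem isLeast_adjustmentCosts {x0 : ι → ℝ} (c : ℝ) (hx0 : ∀ k, 0 ≤ x0 k) :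
    IsLeast (adjustmentCosts x0 c) (|c| / max 1 (∑ k, x0 k)) := by
  refine ⟨?_, fun t ht => ?_⟩
  · rcases max_choice 1 (∑ k, x0 k) with h | h
    · rw [h, div_one]
      exact abs_mem_adjustmentCosts x0 c
    · rw [h]
      exact abs_div_sum_mem_adjustmentCosts c (h ▸ lt_max_of_lt_left one_pos)
  · rw [div_le_iff₀ (zero_lt_one.trans_le (le_max_left _ _))]
    exact abs_le_mul_max_one_of_mem_adjustmentCosts hx0 ht

end AdjustmentCosts

/-- Single-constraint core of the IQTP under the L∞ norm: the minimum of
`max_k (Γ_k + Δ_k) + α + β` over nonnegative variables subject to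
`Σ_k (Δ_k - Γ_k) x⁰_k - α + β = c` equals `|c| · min 1 (1 / Σ_k x⁰_k)` when
`Σ_k x⁰_k > 0`, and equals `|c|` when `x⁰ = 0`. -/
theorem stmt_17 {N : ℕ} (hN : 0 < N) (c : ℝ) (x0 : Fin N → ℝ)
    (hx0 : ∀ k, 0 ≤ x0 k) :
    (0 < ∑ k, x0 k →
      IsLeast {t : ℝ | ∃ (Γ Δ : Fin N → ℝ) (α β : ℝ),
          (∀ k, 0 ≤ Γ k) ∧ (∀ k, 0 ≤ Δ k) ∧ 0 ≤ α ∧ 0 ≤ β ∧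
          (∑ k, (Δ k - Γ k) * x0 k) - α + β = c ∧
          t = Finset.univ.sup'
              (Finset.univ_nonempty_iff.mpr (Fin.pos_iff_nonempty.mp hN))
              (fun k => Γ k + Δ k) + (α + β)}
        (|c| * min 1 (1 / ∑ k, x0 k))) ∧
    (x0 = 0 →
      IsLeast {t : ℝ | ∃ (Γ Δ : Fin N → ℝ) (α β : ℝ),
          (∀ k, 0 ≤ Γ k) ∧ (∀ k, 0 ≤ Δ k) ∧ 0 ≤ α ∧ 0 ≤ β ∧
          (∑ k, (Δ k - Γ k) * x0 k) - α + β = c ∧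
          t = Finset.univ.sup'
              (Finset.univ_nonempty_iff.mpr (Fin.pos_iff_nonempty.mp hN))
              (fun k => Γ k + Δ k) + (α + β)}
        |c|) := by
  have : Nonempty (Fin N) := Fin.pos_iff_nonempty.mp hN
  have hleast := isLeast_adjustmentCosts c hx0
  refine ⟨fun hS => ?_, fun h0 => ?_⟩
  · rwa [min_one_one_div_eq_one_div_max_one hS, mul_one_div]
  · have hS : ∑ k, x0 k = 0 := by simp [h0]
    rwa [hS, max_eq_left zero_le_one, div_one] at hleast
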